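/- Quantum transport cost between two Dirac masses at the same location: for any P, Q ∈ S^d_{++}, the infimum over γ ∈ S^d_{++} of KL(γ|P) + KL(γ|Q) equals tr( P + Q − 2·exp( (log P + log Q)/2 ) ), and it is attained uniquely at γ = exp( (log P + log Q)/2 ). -/

import Mathlib

/-!
For `G = exp((log P + log Q)/2)` we have `log G = (log P + log Q)/2`, hence
`KL(γ|P) + KL(γ|Q) = 2 KL(γ|G) + tr(P + Q - 2G)` for every `γ`, and the claim is Klein's
inequality `KL(γ|G) ≥ 0` with equality only at `γ = G`. In eigenbases `γ = U diag(a) Uᵀ`,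
`G = V diag(b) Vᵀ` and with the orthogonal matrix `W = Uᵀ V`,
`KL(γ|G) = ∑ᵢⱼ Wᵢⱼ² (aᵢ log aᵢ - aᵢ log bⱼ - aᵢ + bⱼ)`, a sum of nonnegative scalar divergences;
it vanishes only if `Wᵢⱼ = 0` whenever `aᵢ ≠ bⱼ`, i.e. `diag(a) W = W diag(b)`, which gives `γ = G`.
-/

open Matrix

/-- Matrix exponential of a real matrix. -/
noncomputable def mexp {d : ℕ} (A : Matrix (Fin d) (Fin d) ℝ) : Matrix (Fin d) (Fin d) ℝ :=
  NormedSpace.exp A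

/-- Matrix logarithm of a symmetric (hermitian) real matrix, defined through the
eigendecomposition `P = U diag(σ) Uᵀ` as `log P = U diag(log σ) Uᵀ` (junk value `0`
on non-symmetric matrices). -/
noncomputable def mlog {d : ℕ} (A : Matrix (Fin d) (Fin d) ℝ) : Matrix (Fin d) (Fin d) ℝ :=
  if h : A.IsHermitian then
    (h.eigenvectorUnitary : Matrix (Fin d) (Fin d) ℝ)
      * diagonal (fun i => Real.log (h.eigenvalues i))
      * star (h.eigenvectorUnitary : Matrix (Fin d) (Fin d) ℝ)
  else 0

/-- Quantum (von Neumann) entropy `H(P) = -tr(P log P - P)`. -/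
noncomputable def qH {d : ℕ} (P : Matrix (Fin d) (Fin d) ℝ) : ℝ :=
  -(P * mlog P - P).trace

/-- Quantum Kullback-Leibler divergence `KL(P|Q) = tr(P log P - P log Q - P + Q)`. -/
noncomputable def qKL {d : ℕ} (P Q : Matrix (Fin d) (Fin d) ℝ) : ℝ :=
  (P * mlog P - P * mlog Q - P + Q).trace

open Real InformationTheory Finset

section ConjDiagonal

variable {n : Type*} [Fintype n] [DecidableEq n] {U V : Matrix n n ℝ}

lemma conj_diagonal_mul_conj_diagonal (hU : U ∈ unitary (Matrix n n ℝ)) (v w : n → ℝ) :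
    U * diagonal v * star U * (U * diagonal w * star U) = U * diagonal (v * w) * star U := by
  simp only [Matrix.mul_assoc, ← Matrix.mul_assoc (star U) U, (Unitary.mem_iff.mp hU).1,
    Matrix.one_mul, ← Matrix.mul_assoc (diagonal v), diagonal_mul_diagonal]
  rfl

lemma trace_conj_diagonal (hU : U ∈ unitary (Matrix n n ℝ)) (v : n → ℝ) :
    (U * diagonal v * star U).trace = ∑ i, v i := by
  rw [trace_mul_comm, ← Matrix.mul_assoc, (Unitary.mem_iff.mp hU).1, Matrix.one_mul,
    trace_diagonal]

lemma trace_diagonal_mul_conj_diagonal (W : Matrix n n ℝ) (v w : n → ℝ) :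
    (diagonal v * (W * diagonal w * star W)).trace = ∑ i, ∑ j, W i j ^ 2 * (v i * w j) := by
  simp only [Matrix.trace, diag_apply, diagonal_mul]
  simp only [mul_apply, diagonal_apply, mul_ite, mul_zero, sum_ite_eq', mem_univ, if_true,
    star_apply, star_trivial, Finset.mul_sum]
  exact sum_congr rfl fun i _ => sum_congr rfl fun j _ => by ring

lemma trace_conj_diagonal_mul_conj_diagonal (hU : U ∈ unitary (Matrix n n ℝ)) (v w : n → ℝ) :
    (U * diagonal v * star U * (V * diagonal w * star V)).trace
      = ∑ i, ∑ j, (star U * V) i j ^ 2 * (v i * w j) := by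
  have hconj : U * diagonal v * star U * (V * diagonal w * star V)
      = U * (diagonal v * ((star U * V) * diagonal w * star (star U * V))) * star U := by
    simp only [star_mul, star_star, Matrix.mul_assoc, (Unitary.mem_iff.mp hU).2, Matrix.mul_one]
  rw [hconj, trace_mul_comm, ← Matrix.mul_assoc, (Unitary.mem_iff.mp hU).1, Matrix.one_mul,
    trace_diagonal_mul_conj_diagonal]

lemma sum_sq_apply_right_eq_one {W : Matrix n n ℝ} (hW : W ∈ unitary (Matrix n n ℝ)) (i : n) :
    ∑ j, W i j ^ 2 = 1 := by
  simpa [mul_apply, sq] using congrFun (congrFun (Unitary.mem_iff.mp hW).2 i) i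

lemma sum_sq_apply_left_eq_one {W : Matrix n n ℝ} (hW : W ∈ unitary (Matrix n n ℝ)) (j : n) :
    ∑ i, W i j ^ 2 = 1 := by
  simpa [mul_apply, sq] using congrFun (congrFun (Unitary.mem_iff.mp hW).1 j) j

lemma trace_relEntropy_conj_diagonal (hU : U ∈ unitary (Matrix n n ℝ))
    (hV : V ∈ unitary (Matrix n n ℝ)) (a b : n → ℝ) :
    (U * diagonal a * star U * (U * diagonal (fun i => log (a i)) * star U)
      - U * diagonal a * star U * (V * diagonal (fun j => log (b j)) * star V)
      - U * diagonal a * star U + V * diagonal b * star V).trace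
      = ∑ i, ∑ j, (star U * V) i j ^ 2 * (a i * log (a i) - a i * log (b j) - a i + b j) := by
  have hW : star U * V ∈ unitary (Matrix n n ℝ) := mul_mem (Unitary.star_mem hU) hV
  have hrow (f : n → ℝ) : ∑ i, ∑ j, (star U * V) i j ^ 2 * f i = ∑ i, f i :=
    sum_congr rfl fun i _ => by rw [← sum_mul, sum_sq_apply_right_eq_one hW, one_mul]
  have hcol (f : n → ℝ) : ∑ i, ∑ j, (star U * V) i j ^ 2 * f j = ∑ j, f j := by
    rw [sum_comm]
    exact sum_congr rfl fun j _ => by rw [← sum_mul, sum_sq_apply_left_eq_one hW, one_mul]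
  simp only [mul_add, mul_sub, sum_add_distrib, sum_sub_distrib, hrow, hcol, trace_add,
    trace_sub, conj_diagonal_mul_conj_diagonal hU, trace_conj_diagonal hU, trace_conj_diagonal hV,
    trace_conj_diagonal_mul_conj_diagonal hU]
  rfl

lemma conj_diagonal_eq_of_diagonal_mul_eq (hU : U ∈ unitary (Matrix n n ℝ))
    (hV : V ∈ unitary (Matrix n n ℝ)) {a b : n → ℝ}
    (h : diagonal a * (star U * V) = star U * V * diagonal b) :
    U * diagonal a * star U = V * diagonal b * star V := by
  calc U * diagonal a * star U = U * (diagonal a * (star U * V)) * star V := by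
        simp only [Matrix.mul_assoc, (Unitary.mem_iff.mp hV).2, Matrix.mul_one]
    _ = V * diagonal b * star V := by
        simp only [h, ← Matrix.mul_assoc, (Unitary.mem_iff.mp hU).2, Matrix.one_mul]

end ConjDiagonal

lemma mul_log_sub_mul_log_sub_add_eq_mul_klFun {x y : ℝ} (hx : 0 < x) (hy : 0 < y) :
    x * log x - x * log y - x + y = y * klFun (x / y) := by
  rw [klFun, log_div hx.ne' hy.ne']
  field_simp
  ring

lemma mul_log_sub_mul_log_sub_add_nonneg {x y : ℝ} (hx : 0 < x) (hy : 0 < y) :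
    0 ≤ x * log x - x * log y - x + y := by
  rw [mul_log_sub_mul_log_sub_add_eq_mul_klFun hx hy]
  exact mul_nonneg hy.le (klFun_nonneg (div_pos hx hy).le)

lemma mul_log_sub_mul_log_sub_add_eq_zero_iff {x y : ℝ} (hx : 0 < x) (hy : 0 < y) :
    x * log x - x * log y - x + y = 0 ↔ x = y := by
  rw [mul_log_sub_mul_log_sub_add_eq_mul_klFun hx hy, mul_eq_zero,
    klFun_eq_zero_iff (div_pos hx hy).le, div_eq_one_iff_eq hy.ne']
  simp [hy.ne']

section MatrixExpLog

open scoped Matrix.Norms.L2Operator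

variable {d : ℕ}

lemma mlog_eq_cfc (A : Matrix (Fin d) (Fin d) ℝ) : mlog A = cfc log A := by
  by_cases hA : A.IsHermitian
  · rw [hA.cfc_eq, mlog, dif_pos hA, IsHermitian.cfc]
    rfl
  · rw [mlog, dif_neg hA]
    exact (cfc_apply_of_not_predicate A hA).symm

lemma mlog_isHermitian (A : Matrix (Fin d) (Fin d) ℝ) : (mlog A).IsHermitian := by
  rw [mlog_eq_cfc]
  exact cfc_predicate log A

lemma mexp_eq_cfc {A : Matrix (Fin d) (Fin d) ℝ} (hA : A.IsHermitian) :
    mexp A = cfc exp A :=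
  (CFC.real_exp_eq_normedSpace_exp hA).symm

lemma mlog_mexp {A : Matrix (Fin d) (Fin d) ℝ} (hA : A.IsHermitian) : mlog (mexp A) = A := by
  rw [mlog_eq_cfc]
  exact CFC.log_exp A hA

open scoped MatrixOrder in
lemma mexp_posDef {A : Matrix (Fin d) (Fin d) ℝ} (hA : A.IsHermitian) : (mexp A).PosDef := by
  rw [mexp_eq_cfc hA]
  exact isStrictlyPositive_iff_posDef.mp
    ((cfc_isStrictlyPositive_iff exp A).mpr fun x _ => exp_pos x)

lemma Matrix.PosDef.exists_unitary_conj_diagonal_mlog {A : Matrix (Fin d) (Fin d) ℝ}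
    (hA : A.PosDef) :
    ∃ U ∈ unitary (Matrix (Fin d) (Fin d) ℝ), ∃ a : Fin d → ℝ, (∀ i, 0 < a i) ∧
      A = U * diagonal a * star U ∧ mlog A = U * diagonal (fun i => log (a i)) * star U := by
  refine ⟨_, hA.isHermitian.eigenvectorUnitary.2, _, hA.eigenvalues_pos, ?_,
    by rw [mlog, dif_pos hA.isHermitian]⟩
  simpa using hA.isHermitian.spectral_theorem

end MatrixExpLog

section QuantumKL

variable {d : ℕ}

theorem qKL_nonneg {γ σ : Matrix (Fin d) (Fin d) ℝ} (hγ : γ.PosDef) (hσ : σ.PosDef) :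
    0 ≤ qKL γ σ := by
  obtain ⟨U, hU, a, ha, rfl, hlogγ⟩ := hγ.exists_unitary_conj_diagonal_mlog
  obtain ⟨V, hV, b, hb, rfl, hlogσ⟩ := hσ.exists_unitary_conj_diagonal_mlog
  rw [qKL, hlogγ, hlogσ, trace_relEntropy_conj_diagonal hU hV]
  exact sum_nonneg fun i _ => sum_nonneg fun j _ =>
    mul_nonneg (sq_nonneg _) (mul_log_sub_mul_log_sub_add_nonneg (ha i) (hb j))

theorem eq_of_qKL_eq_zero {γ σ : Matrix (Fin d) (Fin d) ℝ} (hγ : γ.PosDef) (hσ : σ.PosDef)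
    (h : qKL γ σ = 0) : γ = σ := by
  obtain ⟨U, hU, a, ha, rfl, hlogγ⟩ := hγ.exists_unitary_conj_diagonal_mlog
  obtain ⟨V, hV, b, hb, rfl, hlogσ⟩ := hσ.exists_unitary_conj_diagonal_mlog
  rw [qKL, hlogγ, hlogσ, trace_relEntropy_conj_diagonal hU hV] at h
  have hterm_nonneg (i j : Fin d) : 0 ≤ (star U * V) i j ^ 2
      * (a i * log (a i) - a i * log (b j) - a i + b j) :=
    mul_nonneg (sq_nonneg _) (mul_log_sub_mul_log_sub_add_nonneg (ha i) (hb j))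
  have hterm (i j : Fin d) : (star U * V) i j ^ 2
      * (a i * log (a i) - a i * log (b j) - a i + b j) = 0 :=
    (sum_eq_zero_iff_of_nonneg fun j _ => hterm_nonneg i j).mp
      ((sum_eq_zero_iff_of_nonneg fun i _ => sum_nonneg fun j _ => hterm_nonneg i j).mp h i
        (mem_univ i)) j (mem_univ j)
  refine conj_diagonal_eq_of_diagonal_mul_eq hU hV (ext fun i j => ?_)
  rw [diagonal_mul, mul_diagonal]
  rcases mul_eq_zero.mp (hterm i j) with hW | hab
  · rw [pow_eq_zero_iff two_ne_zero] at hW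
    rw [hW, mul_zero, zero_mul]
  · rw [(mul_log_sub_mul_log_sub_add_eq_zero_iff (ha i) (hb j)).mp hab, mul_comm]

theorem qKL_self (A : Matrix (Fin d) (Fin d) ℝ) : qKL A A = 0 := by
  simp [qKL]

theorem qKL_add_qKL_eq_two_mul_qKL_add_trace {γ P Q G : Matrix (Fin d) (Fin d) ℝ}
    (hG : mlog G = (2:ℝ)⁻¹ • (mlog P + mlog Q)) :
    qKL γ P + qKL γ Q = 2 * qKL γ G + (P + Q - (2:ℝ) • G).trace := by
  simp only [qKL, hG, Matrix.mul_smul, Matrix.mul_add, trace_add, trace_sub, trace_smul,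
    smul_eq_mul]
  ring

end QuantumKL

theorem single_dirac_cost_general {d : ℕ} (P Q : Matrix (Fin d) (Fin d) ℝ) :
    (mexp ((2:ℝ)⁻¹ • (mlog P + mlog Q))).PosDef ∧
    (qKL (mexp ((2:ℝ)⁻¹ • (mlog P + mlog Q))) P
        + qKL (mexp ((2:ℝ)⁻¹ • (mlog P + mlog Q))) Q
      = (P + Q - (2:ℝ) • mexp ((2:ℝ)⁻¹ • (mlog P + mlog Q))).trace) ∧
    (∀ γ : Matrix (Fin d) (Fin d) ℝ, γ.PosDef →
      (P + Q - (2:ℝ) • mexp ((2:ℝ)⁻¹ • (mlog P + mlog Q))).trace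
        ≤ qKL γ P + qKL γ Q) ∧
    (∀ γ : Matrix (Fin d) (Fin d) ℝ, γ.PosDef →
      qKL γ P + qKL γ Q
          = (P + Q - (2:ℝ) • mexp ((2:ℝ)⁻¹ • (mlog P + mlog Q))).trace →
        γ = mexp ((2:ℝ)⁻¹ • (mlog P + mlog Q))) := by
  have hM : ((2:ℝ)⁻¹ • (mlog P + mlog Q)).IsHermitian :=
    ((mlog_isHermitian P).add (mlog_isHermitian Q)).smul (.all _)
  set G := mexp ((2:ℝ)⁻¹ • (mlog P + mlog Q))
  have hG : G.PosDef := mexp_posDef hM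
  have hsplit (γ : Matrix (Fin d) (Fin d) ℝ) :
      qKL γ P + qKL γ Q = 2 * qKL γ G + (P + Q - (2:ℝ) • G).trace :=
    qKL_add_qKL_eq_two_mul_qKL_add_trace (mlog_mexp hM)
  refine ⟨hG, ?_, fun γ hγ => ?_, fun γ hγ heq => ?_⟩
  · rw [hsplit, qKL_self]
    ring
  · linarith [hsplit γ, qKL_nonneg hγ hG]
  · exact eq_of_qKL_eq_zero hγ hG (by linarith [hsplit γ])

/-- **Quantum transport cost between two Dirac masses at the same location.**
For `P, Q ≻ 0`, the infimum over `γ ≻ 0` of `KL(γ|P) + KL(γ|Q)` equals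
`tr(P + Q - 2 exp((log P + log Q)/2))`, attained uniquely at
`γ = exp((log P + log Q)/2)`. -/
theorem single_dirac_cost {d : ℕ} (P Q : Matrix (Fin d) (Fin d) ℝ)
    (hP : P.PosDef) (hQ : Q.PosDef) :
    (mexp ((2:ℝ)⁻¹ • (mlog P + mlog Q))).PosDef ∧
    (qKL (mexp ((2:ℝ)⁻¹ • (mlog P + mlog Q))) P
        + qKL (mexp ((2:ℝ)⁻¹ • (mlog P + mlog Q))) Q
      = (P + Q - (2:ℝ) • mexp ((2:ℝ)⁻¹ • (mlog P + mlog Q))).trace) ∧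
    (∀ γ : Matrix (Fin d) (Fin d) ℝ, γ.PosDef →
      (P + Q - (2:ℝ) • mexp ((2:ℝ)⁻¹ • (mlog P + mlog Q))).trace
        ≤ qKL γ P + qKL γ Q) ∧
    (∀ γ : Matrix (Fin d) (Fin d) ℝ, γ.PosDef →
      qKL γ P + qKL γ Q
          = (P + Q - (2:ℝ) • mexp ((2:ℝ)⁻¹ • (mlog P + mlog Q))).trace →
        γ = mexp ((2:ℝ)⁻¹ • (mlog P + mlog Q))) :=
  single_dirac_cost_general P Q
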